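/- arXiv:2009.06181 — 2 statements merged into one kernel-verified Lean document; each statement's English description precedes it below -/
import Mathlib

section
/- Fix matrices A ∈ ℝ^{n×n}, B ∈ ℝ^{n×m}, C ∈ ℝ^{p×n}, H ∈ ℝ^{n×p}, K ∈ ℝ^{m×n}, and define Ǎ = [[A,0],[0,A]], B̌ = [[0,B],[0,B]], Ȟ = [[0,0],[-H,H]], Ȟ_a = [[0],[H]] ∈ ℝ^{2n×p}, Ǩ = [[K,0],[0,K]], Č = [[C,0],[0,C]]. Let N_f, N_a ≥ 1, let l_fa ∈ ℝ^{N_f×N_a}, let d : Fin N_a → ℝ with D_a = diag(d), and set A_a = I_{N_a} ⊗ (Ǎ+B̌Ǩ) + D_a ⊗ (ȞČ) and B_a = I_{N_a} ⊗ Ȟ_a. Suppose s ∈ ℝ and vectors x_a0 ∈ ℝ^{2nN_a}, a_0 ∈ ℝ^{pN_a} satisfy the zero-dynamics equations of the directly attacked agents: (s·I − A_a) x_a0 = B_a a_0 and (I_{N_a} ⊗ Č) x_a0 = 0. Then (l_fa ⊗ (ȞČ)) x_a0 = 0; that is, the zero-dynamics trajectory of the attacked agents, taken as input x_af = x_a0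 to the followers, necessarily lies in the kernel of the follower input matrix l_fa ⊗ (ȞČ), so the adversary cannot simultaneously excite the zero dynamics of the directly attacked agents and of the followers. -/
open Matrix Kronecker

/-- **Theorem 3 (zero-dynamics attacks cannot propagate to the followers).**
If `(s I − A_a) x_a0 = B_a a_0` and the output `(I_{N_a} ⊗ Č) x_a0` is zero
(a zero-dynamics excitation of the directly attacked agents), then the trajectory
direction `x_a0` lies in the kernel of the follower input matrix `l_fa ⊗ (ȞČ)`,
so the followers' zero dynamics cannot be excited simultaneously. -/
theorem attacked_zero_dynamics_in_ker_follower_input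
    {n m p N_f N_a : ℕ} (hNf : 1 ≤ N_f) (hNa : 1 ≤ N_a)
    (A : Matrix (Fin n) (Fin n) ℝ) (B : Matrix (Fin n) (Fin m) ℝ)
    (C : Matrix (Fin p) (Fin n) ℝ) (H : Matrix (Fin n) (Fin p) ℝ)
    (K : Matrix (Fin m) (Fin n) ℝ)
    (Ac : Matrix (Fin n ⊕ Fin n) (Fin n ⊕ Fin n) ℝ) (hAc : Ac = fromBlocks A 0 0 A)
    (Bc : Matrix (Fin n ⊕ Fin n) (Fin m ⊕ Fin m) ℝ) (hBc : Bc = fromBlocks 0 B 0 B)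
    (Hc : Matrix (Fin n ⊕ Fin n) (Fin p ⊕ Fin p) ℝ) (hHc : Hc = fromBlocks 0 0 (-H) H)
    (Ha : Matrix (Fin n ⊕ Fin n) (Fin p) ℝ) (hHa : Ha = fromRows 0 H)
    (Kc : Matrix (Fin m ⊕ Fin m) (Fin n ⊕ Fin n) ℝ) (hKc : Kc = fromBlocks K 0 0 K)
    (Cc : Matrix (Fin p ⊕ Fin p) (Fin n ⊕ Fin n) ℝ) (hCc : Cc = fromBlocks C 0 0 C)
    (l_fa : Matrix (Fin N_f) (Fin N_a) ℝ) (d : Fin N_a → ℝ)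
    (Aa : Matrix (Fin N_a × (Fin n ⊕ Fin n)) (Fin N_a × (Fin n ⊕ Fin n)) ℝ)
    (hAa : Aa = (1 : Matrix (Fin N_a) (Fin N_a) ℝ) ⊗ₖ (Ac + Bc * Kc) +
        (Matrix.diagonal d) ⊗ₖ (Hc * Cc))
    (Ba : Matrix (Fin N_a × (Fin n ⊕ Fin n)) (Fin N_a × Fin p) ℝ)
    (hBa : Ba = (1 : Matrix (Fin N_a) (Fin N_a) ℝ) ⊗ₖ Ha)
    (s : ℝ) (x_a0 : Fin N_a × (Fin n ⊕ Fin n) → ℝ) (a_0 : Fin N_a × Fin p → ℝ)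
    (hzero : (s • (1 : Matrix (Fin N_a × (Fin n ⊕ Fin n))
        (Fin N_a × (Fin n ⊕ Fin n)) ℝ) - Aa).mulVec x_a0 = Ba.mulVec a_0)
    (hout : (((1 : Matrix (Fin N_a) (Fin N_a) ℝ) ⊗ₖ Cc)).mulVec x_a0 = 0) :
    (l_fa ⊗ₖ (Hc * Cc)).mulVec x_a0 = 0 := by
  have h : l_fa ⊗ₖ (Hc * Cc) =
      (l_fa ⊗ₖ Hc) * ((1 : Matrix (Fin N_a) (Fin N_a) ℝ) ⊗ₖ Cc) := by
    rw [← Matrix.mul_kronecker_mul, Matrix.mul_one]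
  rw [h, ← Matrix.mulVec_mulVec, hout, Matrix.mulVec_zero]
end

section
/- Let A_a ∈ ℝ^{p×p}, A_f ∈ ℝ^{q×q}, A_fa ∈ ℝ^{q×p}, B_a ∈ ℝ^{p×m}, and set A* = [[A_a, 0],[A_fa, A_f]] ∈ ℝ^{(p+q)×(p+q)} and B* = [B_a; 0] ∈ ℝ^{(p+q)×m}. If the pair (A*, B*) is controllable, then the pair (A_a, B_a) is controllable and the pair (A_f, A_fa) is controllable. -/
/-!
By Cayley–Hamilton, `(A, B)` is controllable iff no nonzero row vector annihilates every
`A ^ k * B`. The cascade matrix is block lower triangular, so the row vector `[u, 0]` stays of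
the form `[u Aₐᵏ, 0]` under its powers, and `[0, w]` stays `[0, w A_fᵏ]` as soon as `w`
annihilates every `A_fᵏ A_fa`. Hence a left null vector of either subsystem's controllability
matrix extends by zero to one of the cascade.
-/

open Matrix

/-- The `K`-step controllability matrix `[B, AB, A²B, …, A^{K-1}B]` of the pair `(A, B)`. -/
def ctrbMat {s m : Type*} [Fintype s] [DecidableEq s]
    (A : Matrix s s ℝ) (B : Matrix s m ℝ) (K : ℕ) : Matrix s (Fin K × m) ℝ :=
  Matrix.of fun i km => (A ^ (km.1 : ℕ) * B) i km.2

/-- The pair `(A, B)` is controllable if its `s`-step controllability matrix has full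
row rank `s` (where `s` is the state dimension). -/
def IsControllable {s m : Type*} [Fintype s] [DecidableEq s] [Fintype m]
    (A : Matrix s s ℝ) (B : Matrix s m ℝ) : Prop :=
  (ctrbMat A B (Fintype.card s)).rank = Fintype.card s

namespace Matrix

variable {K R m n s : Type*}

theorem rank_eq_card_iff_vecMul_eq_zero [Field K] [Fintype m] [Fintype n] (M : Matrix m n K) :
    M.rank = Fintype.card m ↔ ∀ v : m → K, v ᵥ* M = 0 → v = 0 := by
  rw [rank_eq_finrank_span_row, ← Set.finrank, eq_comm,
    ← linearIndependent_iff_card_eq_finrank_span, ← vecMul_injective_iff, ← coe_vecMulLinear,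
    injective_iff_map_eq_zero]
  rfl

/-- Cayley–Hamilton: every power of `A` is a combination of `A ^ i` with `i < card s`. -/
theorem vecMul_pow_mul_eq_zero_of_forall_lt_card [CommRing R] [Fintype s] [DecidableEq s]
    {A : Matrix s s R} {B : Matrix s n R} {v : s → R}
    (hv : ∀ i < Fintype.card s, v ᵥ* (A ^ i * B) = 0) (k : ℕ) : v ᵥ* (A ^ k * B) = 0 := by
  nontriviality R
  cases isEmpty_or_nonempty s
  · rw [Subsingleton.elim v 0, zero_vecMul]
  have hdeg : (Polynomial.X ^ k %ₘ A.charpoly).natDegree < Fintype.card s := by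
    rw [← charpoly_natDegree_eq_dim A]
    refine Polynomial.natDegree_modByMonic_lt _ A.charpoly_monic fun h1 => ?_
    have hcard := charpoly_natDegree_eq_dim A
    rw [h1, Polynomial.natDegree_one] at hcard
    exact Fintype.card_ne_zero hcard.symm
  rw [pow_eq_aeval_mod_charpoly, Polynomial.aeval_eq_sum_range' hdeg, Matrix.sum_mul,
    vecMul_sum]
  refine Finset.sum_eq_zero fun i hi => ?_
  rw [Matrix.smul_mul, vecMul_smul, hv i (Finset.mem_range.mp hi), smul_zero]

theorem sumElim_zero_vecMul_fromBlocks_pow [CommRing R] [Fintype m] [Fintype n]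
    [DecidableEq m] [DecidableEq n] (A : Matrix m m R) (C : Matrix n m R) (D : Matrix n n R)
    (u : m → R) (k : ℕ) :
    Sum.elim u 0 ᵥ* fromBlocks A 0 C D ^ k = Sum.elim (u ᵥ* A ^ k) 0 := by
  induction k with
  | zero => simp
  | succ k ih => simp [pow_succ, ← vecMul_vecMul, ih, vecMul_fromBlocks]

theorem zero_sumElim_vecMul_fromBlocks_pow [CommRing R] [Fintype m] [Fintype n]
    [DecidableEq m] [DecidableEq n] (A : Matrix m m R) {C : Matrix n m R} {D : Matrix n n R}
    {w : n → R} (hw : ∀ i, w ᵥ* (D ^ i * C) = 0) (k : ℕ) :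
    Sum.elim (0 : m → R) w ᵥ* fromBlocks A 0 C D ^ k = Sum.elim (0 : m → R) (w ᵥ* D ^ k) := by
  induction k with
  | zero => simp
  | succ k ih =>
    rw [pow_succ, ← vecMul_vecMul, ih, vecMul_fromBlocks]
    simp [vecMul_vecMul, hw k, pow_succ]

end Matrix

theorem vecMul_ctrbMat_eq_zero_iff {s m : Type*} [Fintype s] [DecidableEq s]
    (A : Matrix s s ℝ) (B : Matrix s m ℝ) (K : ℕ) (v : s → ℝ) :
    v ᵥ* ctrbMat A B K = 0 ↔ ∀ k < K, v ᵥ* (A ^ k * B) = 0 := by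
  simp only [funext_iff, Prod.forall, Fin.forall_iff]
  simp [ctrbMat, vecMul, dotProduct]

theorem isControllable_iff_forall_vecMul_pow_mul_eq_zero {s m : Type*} [Fintype s]
    [DecidableEq s] [Fintype m] (A : Matrix s s ℝ) (B : Matrix s m ℝ) :
    IsControllable A B ↔ ∀ v : s → ℝ, (∀ k, v ᵥ* (A ^ k * B) = 0) → v = 0 := by
  rw [IsControllable, rank_eq_card_iff_vecMul_eq_zero]
  simp only [vecMul_ctrbMat_eq_zero_iff]
  exact forall_congr' fun v => imp_congr_left
    ⟨vecMul_pow_mul_eq_zero_of_forall_lt_card, fun hv k _ => hv k⟩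

/-- **Necessity of subsystem controllability for the cascade.** If the cascade pair
`(A*, B*) = ([[A_a,0],[A_fa,A_f]], [B_a;0])` is controllable, then both `(A_a, B_a)`
and `(A_f, A_fa)` are controllable. -/
theorem cascade_controllable_imp_subsystems
    {p q m : ℕ}
    (Aa : Matrix (Fin p) (Fin p) ℝ) (Af : Matrix (Fin q) (Fin q) ℝ)
    (Afa : Matrix (Fin q) (Fin p) ℝ) (Ba : Matrix (Fin p) (Fin m) ℝ)
    (h : IsControllable (fromBlocks Aa 0 Afa Af) (fromRows Ba 0)) :
    IsControllable Aa Ba ∧ IsControllable Af Afa := by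
  simp only [isControllable_iff_forall_vecMul_pow_mul_eq_zero] at h ⊢
  constructor
  · intro u hu
    have hzero := h (Sum.elim u 0) fun k => by
      rw [← vecMul_vecMul, sumElim_zero_vecMul_fromBlocks_pow, sumElim_vecMul_fromRows,
        vecMul_vecMul, hu k, vecMul_zero, add_zero]
    exact funext fun i => congrFun hzero (Sum.inl i)
  · intro w hw
    have hzero := h (Sum.elim 0 w) fun k => by
      rw [← vecMul_vecMul, zero_sumElim_vecMul_fromBlocks_pow Aa hw, sumElim_vecMul_fromRows,
        zero_vecMul, vecMul_zero, add_zero]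
    exact funext fun i => congrFun hzero (Sum.inr i)
end
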